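/- For every integer j and m = lT with l a nonnegative integer, the empirical controllability Gramian of the periodic system satisfies ‖W_c(j) − W_ce(j;m)‖ ≤ ‖F(j+T,j)^l‖² ‖W_c(j)‖. -/

import Mathlib

open scoped Matrix

noncomputable section

open scoped Matrix.Norms.L2Operator

/-- `transMatAux A d i = A(i+d-1) * ⋯ * A(i)`. -/
def transMatAux {n : ℕ} (A : ℤ → Matrix (Fin n) (Fin n) ℂ) : ℕ → ℤ → Matrix (Fin n) (Fin n) ℂ
  | 0, _ => 1
  | (d + 1), i => A (i + d) * transMatAux A d i

/-- The state transition matrix `F(j,i) = A(j-1) * A(j-2) * ⋯ * A(i)` for `j ≥ i`,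
with `F(i,i) = 1`. -/
def stateTrans {n : ℕ} (A : ℤ → Matrix (Fin n) (Fin n) ℂ) (j i : ℤ) :
    Matrix (Fin n) (Fin n) ℂ :=
  transMatAux A (j - i).toNat i

/-- Controllability Gramian at time `j`:
`W_c(j) = ∑_{i=-∞}^{j-1} F(j,i+1) B(i) B(i)* F(j,i+1)*`, parametrized by `i = j-1-k`, `k : ℕ`. -/
def Wc {n p : ℕ} (A : ℤ → Matrix (Fin n) (Fin n) ℂ) (B : ℤ → Matrix (Fin n) (Fin p) ℂ)
    (j : ℤ) : Matrix (Fin n) (Fin n) ℂ :=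
  ∑' k : ℕ,
    stateTrans A j (j - k) * B (j - 1 - k) * (B (j - 1 - k))ᴴ * (stateTrans A j (j - k))ᴴ

/-- Observability Gramian at time `j`:
`W_o(j) = ∑_{i=j}^{∞} F(i,j)* C(i)* C(i) F(i,j)`, parametrized by `i = j+k`, `k : ℕ`. -/
def Wo {n q : ℕ} (A : ℤ → Matrix (Fin n) (Fin n) ℂ) (C : ℤ → Matrix (Fin q) (Fin n) ℂ)
    (j : ℤ) : Matrix (Fin n) (Fin n) ℂ :=
  ∑' k : ℕ, (stateTrans A (j + k) j)ᴴ * (C (j + k))ᴴ * C (j + k) * stateTrans A (j + k) j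

/-- Empirical controllability Gramian at time `j` over `m` steps:
`W_ce(j;m) = ∑_{i=j-m}^{j-1} F(j,i+1) B(i) B(i)* F(j,i+1)*`, parametrized by `i = j-1-k`. -/
def Wce {n p : ℕ} (A : ℤ → Matrix (Fin n) (Fin n) ℂ) (B : ℤ → Matrix (Fin n) (Fin p) ℂ)
    (j : ℤ) (m : ℕ) : Matrix (Fin n) (Fin n) ℂ :=
  ∑ k ∈ Finset.range m,
    stateTrans A j (j - k) * B (j - 1 - k) * (B (j - 1 - k))ᴴ * (stateTrans A j (j - k))ᴴ

/-- Empirical observability Gramian at time `j` over `m` steps: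
`W_oe(j;m) = ∑_{i=j}^{j+m-1} F(i,j)* C(i)* C(i) F(i,j)`, parametrized by `i = j+k`. -/
def Woe {n q : ℕ} (A : ℤ → Matrix (Fin n) (Fin n) ℂ) (C : ℤ → Matrix (Fin q) (Fin n) ℂ)
    (j : ℤ) (m : ℕ) : Matrix (Fin n) (Fin n) ℂ :=
  ∑ k ∈ Finset.range m,
    (stateTrans A (j + k) j)ᴴ * (C (j + k))ᴴ * C (j + k) * stateTrans A (j + k) j

/-!
Let `f k` be the `k`-th summand of `W_c(j)` (the one with `i = j - 1 - k`) and `G = F(j+T, j)`.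
Periodicity of `A` and `B` gives `f (k + T) = G f(k) G*`, hence `f (k + lT) = G^l f(k) (G^l)*`,
so the tail of the series after `lT` terms is `G^l W_c(j) (G^l)*`, of norm at most
`‖G^l‖² ‖W_c(j)‖`. The series converges (so `W_c(j)` is not the junk value of a divergent `tsum`)
because `ρ(G) < 1` makes `‖G^q‖` decay geometrically by Gelfand's formula, and
`‖f (qT + r)‖ ≤ ‖G^q‖² ‖f r‖`.
-/

open Filter
open scoped NNReal

section Decay

variable {E : Type*} [NormedRing E] [NormedAlgebra ℂ E] [CompleteSpace E]

theorem eventually_norm_pow_le_of_spectralRadius_lt {a : E} {r : ℝ≥0}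
    (h : spectralRadius ℂ a < r) : ∀ᶠ k : ℕ in atTop, ‖a ^ k‖ ≤ (r : ℝ) ^ k := by
  have hroot := (spectrum.pow_nnnorm_pow_one_div_tendsto_nhds_spectralRadius a).eventually_lt_const h
  filter_upwards [hroot, eventually_gt_atTop 0] with k hk hk0
  rw [one_div, ENNReal.rpow_inv_lt_iff (by positivity), ENNReal.rpow_natCast] at hk
  exact_mod_cast hk.le

theorem summable_norm_pow_sq_of_spectralRadius_lt_one {a : E} (h : spectralRadius ℂ a < 1) :
    Summable fun k : ℕ => ‖a ^ k‖ ^ 2 := by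
  obtain ⟨r, hr, hr_lt⟩ := ENNReal.lt_iff_exists_nnreal_btwn.mp h
  have hr1 : (r : ℝ) < 1 := by exact_mod_cast hr_lt
  refine .of_norm_bounded_eventually_nat
    (summable_geometric_of_lt_one (sq_nonneg (r : ℝ)) (by nlinarith [r.coe_nonneg])) ?_
  filter_upwards [eventually_norm_pow_le_of_spectralRadius_lt hr] with k hk
  rw [norm_pow, norm_norm, ← pow_mul, mul_comm, pow_mul]
  exact pow_le_pow_left₀ (norm_nonneg _) hk 2

end Decay

section Conjugation

theorem conj_pow_of_add_period {E : Type*} [Monoid E] [StarMul E] {f : ℕ → E} {G : E} {T : ℕ}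
    (hf : ∀ k, f (k + T) = G * f k * star G) (k l : ℕ) :
    f (k + l * T) = G ^ l * f k * star (G ^ l) := by
  induction l with
  | zero => simp
  | succ l ih =>
    rw [add_mul, one_mul, ← add_assoc, hf, ih, pow_succ', star_mul]
    simp only [mul_assoc]

variable {E : Type*} [NormedRing E] [StarRing E] [NormedStarGroup E]

theorem norm_mul_mul_star_le (a b : E) : ‖a * b * star a‖ ≤ ‖a‖ ^ 2 * ‖b‖ :=
  calc ‖a * b * star a‖ ≤ ‖a‖ * ‖b‖ * ‖star a‖ := norm_mul₃_le
    _ = ‖a‖ ^ 2 * ‖b‖ := by rw [norm_star]; ring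

variable [NormedAlgebra ℂ E] [CompleteSpace E] {f : ℕ → E} {G : E} {T : ℕ}

theorem summable_of_add_period (hT : 0 < T) (hG : spectralRadius ℂ G < 1)
    (hf : ∀ k, f (k + T) = G * f k * star G) : Summable f := by
  have : NeZero T := ⟨hT.ne'⟩
  rw [← (Nat.divModEquiv T).symm.summable_iff]
  refine .of_norm_bounded ((summable_norm_pow_sq_of_spectralRadius_lt_one hG).mul_of_nonneg
    (Summable.of_finite (f := fun r : Fin T => ‖f r‖)) (fun _ => by positivity)
    (fun _ => norm_nonneg _)) fun ⟨q, r⟩ => ?_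
  simp only [Function.comp_apply, Nat.divModEquiv, Equiv.coe_fn_symm_mk]
  rw [add_comm, conj_pow_of_add_period hf]
  exact norm_mul_mul_star_le _ _

theorem tsum_sub_sum_range_of_add_period (hT : 0 < T) (hG : spectralRadius ℂ G < 1)
    (hf : ∀ k, f (k + T) = G * f k * star G) (l : ℕ) :
    ∑' k, f k - ∑ k ∈ Finset.range (l * T), f k = G ^ l * (∑' k, f k) * star (G ^ l) := by
  have hs := summable_of_add_period hT hG hf
  calc ∑' k, f k - ∑ k ∈ Finset.range (l * T), f k = ∑' k, f (k + l * T) := by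
        rw [← hs.sum_add_tsum_nat_add (l * T), add_sub_cancel_left]
    _ = G ^ l * (∑' k, f k) * star (G ^ l) := by
        simp only [conj_pow_of_add_period hf]
        rw [(hs.mul_left _).tsum_mul_right, hs.tsum_mul_left]

theorem norm_tsum_sub_sum_range_le_of_add_period (hT : 0 < T) (hG : spectralRadius ℂ G < 1)
    (hf : ∀ k, f (k + T) = G * f k * star G) (l : ℕ) :
    ‖∑' k, f k - ∑ k ∈ Finset.range (l * T), f k‖ ≤ ‖G ^ l‖ ^ 2 * ‖∑' k, f k‖ := by
  rw [tsum_sub_sum_range_of_add_period hT hG hf]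
  exact norm_mul_mul_star_le _ _

end Conjugation

section PeriodicSystem

variable {n p : ℕ}

theorem transMatAux_add (A : ℤ → Matrix (Fin n) (Fin n) ℂ) (d e : ℕ) (i : ℤ) :
    transMatAux A (d + e) i = transMatAux A d (i + e) * transMatAux A e i := by
  induction d with
  | zero => simp [transMatAux]
  | succ d ih =>
    rw [Nat.add_right_comm, transMatAux, transMatAux, ih, ← mul_assoc]
    push_cast
    ring_nf

theorem transMatAux_periodic {A : ℤ → Matrix (Fin n) (Fin n) ℂ} {c : ℤ}
    (hA : Function.Periodic A c) (d : ℕ) : Function.Periodic (transMatAux A d) c := by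
  induction d with
  | zero => exact fun _ => rfl
  | succ d ih =>
    intro i
    rw [transMatAux, transMatAux, ih, add_right_comm, hA]

theorem stateTrans_add_natCast (A : ℤ → Matrix (Fin n) (Fin n) ℂ) (i : ℤ) (k : ℕ) :
    stateTrans A (i + k) i = transMatAux A k i := by
  rw [stateTrans, add_sub_cancel_left, Int.toNat_natCast]

theorem stateTrans_sub_natCast (A : ℤ → Matrix (Fin n) (Fin n) ℂ) (j : ℤ) (k : ℕ) :
    stateTrans A j (j - k) = transMatAux A k (j - k) := by
  rw [← stateTrans_add_natCast, sub_add_cancel]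

theorem stateTrans_sub_add_period {A : ℤ → Matrix (Fin n) (Fin n) ℂ} {T : ℕ}
    (hA : Function.Periodic A T) (j : ℤ) (k : ℕ) :
    stateTrans A j (j - ↑(k + T)) = stateTrans A (j + T) j * stateTrans A j (j - k) := by
  rw [stateTrans_sub_natCast, stateTrans_sub_natCast, stateTrans_add_natCast, add_comm k,
    transMatAux_add]
  push_cast
  rw [sub_add_eq_sub_sub, sub_add_cancel, (transMatAux_periodic hA T).sub_eq, sub_right_comm,
    (transMatAux_periodic hA k).sub_eq]

def ctrbGramianTerm (A : ℤ → Matrix (Fin n) (Fin n) ℂ) (B : ℤ → Matrix (Fin n) (Fin p) ℂ)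
    (j : ℤ) (k : ℕ) : Matrix (Fin n) (Fin n) ℂ :=
  stateTrans A j (j - k) * B (j - 1 - k) * (B (j - 1 - k))ᴴ * (stateTrans A j (j - k))ᴴ

theorem ctrbGramianTerm_add_period {A : ℤ → Matrix (Fin n) (Fin n) ℂ}
    {B : ℤ → Matrix (Fin n) (Fin p) ℂ} {T : ℕ} (hA : Function.Periodic A T)
    (hB : Function.Periodic B T) (j : ℤ) (k : ℕ) :
    ctrbGramianTerm A B j (k + T) =
      stateTrans A (j + T) j * ctrbGramianTerm A B j k * star (stateTrans A (j + T) j) := by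
  have hBk : B (j - 1 - ↑(k + T)) = B (j - 1 - k) := by
    rw [Nat.cast_add, ← sub_sub, hB.sub_eq]
  simp only [ctrbGramianTerm, stateTrans_sub_add_period hA, hBk, Matrix.star_eq_conjTranspose,
    Matrix.conjTranspose_mul, Matrix.mul_assoc]

end PeriodicSystem

theorem periodic_empirical_controllability_gramian_error_bound_general
    (n p T : ℕ) (hT : 1 ≤ T)
    (A : ℤ → Matrix (Fin n) (Fin n) ℂ) (B : ℤ → Matrix (Fin n) (Fin p) ℂ)
    (hA : ∀ k : ℤ, A (k + T) = A k) (hB : ∀ k : ℤ, B (k + T) = B k)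
    (hstab : ∀ j : ℤ, spectralRadius ℂ (stateTrans A (j + T) j) < 1)
    (j : ℤ) (l : ℕ) :
    ‖Wc A B j - Wce A B j (l * T)‖ ≤ ‖stateTrans A (j + T) j ^ l‖ ^ 2 * ‖Wc A B j‖ :=
  norm_tsum_sub_sum_range_le_of_add_period hT (hstab j) (ctrbGramianTerm_add_period hA hB j) l

/-- For every integer `j` and `m = lT` with `l` a nonnegative integer,
`‖W_c(j) − W_ce(j;m)‖ ≤ ‖F(j+T,j)^l‖² ‖W_c(j)‖`, where `‖·‖` is the operator norm
induced by the Euclidean norm. -/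
theorem periodic_empirical_controllability_gramian_error_bound
    (n p q T : ℕ) (hn : 1 ≤ n) (hp : 1 ≤ p) (hq : 1 ≤ q) (hT : 1 ≤ T)
    (A : ℤ → Matrix (Fin n) (Fin n) ℂ) (B : ℤ → Matrix (Fin n) (Fin p) ℂ)
    (C : ℤ → Matrix (Fin q) (Fin n) ℂ)
    (hA : ∀ k : ℤ, A (k + T) = A k) (hB : ∀ k : ℤ, B (k + T) = B k)
    (hC : ∀ k : ℤ, C (k + T) = C k)
    (hstab : ∀ j : ℤ, spectralRadius ℂ (stateTrans A (j + T) j) < 1)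
    (j : ℤ) (l : ℕ) :
    ‖Wc A B j - Wce A B j (l * T)‖ ≤ ‖stateTrans A (j + T) j ^ l‖ ^ 2 * ‖Wc A B j‖ :=
  periodic_empirical_controllability_gramian_error_bound_general n p T hT A B hA hB hstab j l
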